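/- Let γ ∈ (0,2), Q = γ/2 + 2/γ, μ > 0, and set μ̃ = (μπ l(γ²/4))^{4/γ²} / (π l(4/γ²)). Define R^{DOZZ}(α) = −( πμ l(γ²/4) )^{2(Q−α)/γ} · ( Γ(−γ(Q−α)/2) / Γ(γ(Q−α)/2) ) · ( Γ(−2(Q−α)/γ) / Γ(2(Q−α)/γ) ) for real α. Then for every real α such that none of the Gamma functions appearing on either side of the equation below (including those defining μ̃) is evaluated at a nonpositive integer, R^{DOZZ} satisfies the dual shift equation R^{DOZZ}(α) = −μ̃π · R^{DOZZ}(α + 2/γ) / ( l(−4/γ²) · l(2α/γ) · l(2 + 4/γ² − 2α/γ) ). -/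

import Mathlib

open MeasureTheory Set

/-- The special function `l(x) = Γ(x)/Γ(1-x)`. -/
noncomputable def lr (x : ℝ) : ℝ := Real.Gamma x / Real.Gamma (1 - x)

/-- The explicit reflection coefficient `R^{DOZZ}` of Liouville conformal field theory. -/
noncomputable def Rdozz (γ μ α : ℝ) : ℝ :=
  -(Real.pi * μ * lr (γ^2/4)) ^ (2*((γ/2 + 2/γ) - α)/γ)
    * (Real.Gamma (-(γ*((γ/2 + 2/γ) - α)/2)) / Real.Gamma (γ*((γ/2 + 2/γ) - α)/2))
    * (Real.Gamma (-(2*((γ/2 + 2/γ) - α)/γ)) / Real.Gamma (2*((γ/2 + 2/γ) - α)/γ))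

/-!
Write `f(x) = Γ(-x)/Γ(x)`, `c = 4/γ²`, `a = γ(Q-α)/2` and `P = πμ l(γ²/4) > 0`. Then
`R(α) = -P^{ca} f(a) f(ca)`, and the shift `α ↦ α + 2/γ` is `a ↦ a - 1`. The functional equation
`Γ(s+1) = sΓ(s)` gives `f(a-1) = a(1-a) f(a)`, `l(1+x) = x / f(x)` and `l(x) = -1/(x f(x))`, while
`l(1-x) = 1/l(x)` holds outright; after these substitutions and `P^{ca} = P^c P^{c(a-1)}` both sides
are the same rational function of `P^c`, `P^{c(a-1)}`, `f(a)`, `f(c)` and `f(c(a-1))`.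
-/

open Real

noncomputable def gammaRatio (x : ℝ) : ℝ := Gamma (-x) / Gamma x

lemma gammaRatio_ne_zero {x : ℝ} (h : ∀ n : ℕ, x ≠ -n) (h' : ∀ n : ℕ, -x ≠ -n) :
    gammaRatio x ≠ 0 :=
  div_ne_zero (Gamma_ne_zero h') (Gamma_ne_zero h)

lemma gammaRatio_sub_one {x : ℝ} (h0 : x ≠ 0) (h1 : x ≠ 1) :
    gammaRatio (x - 1) = x * (1 - x) * gammaRatio x := by
  have hneg : Gamma (-(x - 1)) = -x * Gamma (-x) := by
    rw [show -(x - 1) = -x + 1 by ring, Gamma_add_one (neg_ne_zero.mpr h0)]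
  have hpos : Gamma (x - 1) = Gamma x / (x - 1) := by
    rw [eq_div_iff (sub_ne_zero.mpr h1), mul_comm, ← Gamma_add_one (sub_ne_zero.mpr h1),
      sub_add_cancel]
  rw [gammaRatio, gammaRatio, hneg, hpos, div_div_eq_mul_div]
  ring

lemma lr_pos {x : ℝ} (h0 : 0 < x) (h1 : x < 1) : 0 < lr x :=
  div_pos (Gamma_pos_of_pos h0) (Gamma_pos_of_pos (sub_pos.mpr h1))

lemma lr_one_sub (x : ℝ) : lr (1 - x) = (lr x)⁻¹ := by
  rw [lr, lr, sub_sub_cancel, inv_div]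

lemma lr_eq_neg_inv {x : ℝ} (hx : x ≠ 0) : lr x = -(x * gammaRatio x)⁻¹ := by
  rw [lr, gammaRatio, show 1 - x = -x + 1 by ring, Gamma_add_one (neg_ne_zero.mpr hx),
    mul_div_assoc', inv_div, neg_mul, div_neg]

lemma lr_one_add {x : ℝ} (hx : x ≠ 0) : lr (1 + x) = x / gammaRatio x := by
  rw [lr, gammaRatio, sub_add_cancel_left, add_comm, Gamma_add_one hx, div_div_eq_mul_div]

lemma lr_neg {x : ℝ} (hx : x ≠ 0) : lr (-x) = gammaRatio x / x := by
  rw [show -x = 1 - (1 + x) by ring, lr_one_sub, lr_one_add hx, inv_div]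

theorem dual_shift_identity {P c a : ℝ} (hP : 0 < P) (hc : c ≠ 0) (ha0 : a ≠ 0) (ha1 : a ≠ 1)
    (hfc : gammaRatio c ≠ 0) (hfb : gammaRatio (c * (a - 1)) ≠ 0) :
    -P ^ (c * a) * gammaRatio a * gammaRatio (c * a)
      = -(P ^ c / (π * lr c)) * π
          * (-P ^ (c * (a - 1)) * gammaRatio (a - 1) * gammaRatio (c * (a - 1)))
          / (lr (-c) * lr (1 - c * (a - 1)) * lr (1 + c * a)) := by
  have hb : c * a ≠ 0 := mul_ne_zero hc ha0
  have hb' : c * (a - 1) ≠ 0 := mul_ne_zero hc (sub_ne_zero.mpr ha1)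
  have hsplit : P ^ (c * a) = P ^ c * P ^ (c * (a - 1)) := by
    rw [← rpow_add hP]; ring_nf
  rw [lr_eq_neg_inv hc, lr_neg hc, lr_one_sub, lr_eq_neg_inv hb', lr_one_add hb,
    gammaRatio_sub_one ha0 ha1, hsplit]
  have hPc : P ^ c ≠ 0 := (rpow_pos_of_pos hP c).ne'
  have hPb : P ^ (c * (a - 1)) ≠ 0 := (rpow_pos_of_pos hP _).ne'
  have ha1' : a - 1 ≠ 0 := sub_ne_zero.mpr ha1
  field_simp
  ring

lemma Rdozz_eq_gammaRatio {γ μ α a : ℝ} (hγ : γ ≠ 0) (ha : γ * ((γ/2 + 2/γ) - α) / 2 = a) :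
    Rdozz γ μ α
      = -(π * μ * lr (γ^2/4)) ^ (4/γ^2 * a) * gammaRatio a * gammaRatio (4/γ^2 * a) := by
  have hb : 2 * ((γ/2 + 2/γ) - α) / γ = 4/γ^2 * a := by
    rw [← ha]; field_simp; ring
  rw [Rdozz, gammaRatio, gammaRatio, ha, hb]

/-- Dual shift equation for the explicit reflection coefficient:
`R(α) = -μ̃π R(α+2/γ) / ( l(-4/γ²) l(2α/γ) l(2+4/γ²-2α/γ) )`, where
`μ̃ = (μπ l(γ²/4))^{4/γ²}/(π l(4/γ²))` is the dual cosmological constant. -/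
theorem rdozz_second_shift (γ μ α : ℝ) (hγ : γ ∈ Set.Ioo (0:ℝ) 2) (hμ : 0 < μ)
    (hΓ : ∀ x ∈ ([γ^2/4, 1 - γ^2/4, 4/γ^2, 1 - 4/γ^2,
        -(γ*((γ/2 + 2/γ) - α)/2), γ*((γ/2 + 2/γ) - α)/2,
        -(2*((γ/2 + 2/γ) - α)/γ), 2*((γ/2 + 2/γ) - α)/γ,
        -(γ*((γ/2 + 2/γ) - (α + 2/γ))/2), γ*((γ/2 + 2/γ) - (α + 2/γ))/2,
        -(2*((γ/2 + 2/γ) - (α + 2/γ))/γ), 2*((γ/2 + 2/γ) - (α + 2/γ))/γ,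
        -4/γ^2, 1 + 4/γ^2,
        2*α/γ, 1 - 2*α/γ,
        2 + 4/γ^2 - 2*α/γ, 1 - (2 + 4/γ^2 - 2*α/γ)] : List ℝ),
      ∀ n : ℕ, x ≠ -(n:ℝ)) :
    Rdozz γ μ α
      = -((μ * Real.pi * lr (γ^2/4)) ^ (4/γ^2) / (Real.pi * lr (4/γ^2))) * Real.pi
          * Rdozz γ μ (α + 2/γ)
          / (lr (-4/γ^2) * lr (2*α/γ) * lr (2 + 4/γ^2 - 2*α/γ)) := by
  obtain ⟨hγ0, hγ2⟩ := hγ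
  have hγ' : γ ≠ 0 := hγ0.ne'
  obtain ⟨a, ha⟩ : ∃ a, γ * ((γ/2 + 2/γ) - α) / 2 = a := ⟨_, rfl⟩
  have hshift : γ * ((γ/2 + 2/γ) - (α + 2/γ)) / 2 = a - 1 := by
    rw [← ha]; field_simp; ring
  have hshift' : 2 * ((γ/2 + 2/γ) - (α + 2/γ)) / γ = 4/γ^2 * (a - 1) := by
    rw [← ha]; field_simp; ring
  rw [ha, hshift, hshift', neg_div] at hΓ
  have ha0 : a ≠ 0 := by simpa using hΓ (-a) (by simp) 0
  have ha1 : a ≠ 1 := by simpa [sub_eq_zero] using hΓ (a - 1) (by simp) 0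
  have hfc : gammaRatio (4/γ^2) ≠ 0 := gammaRatio_ne_zero (hΓ _ (by simp)) (hΓ _ (by simp))
  have hfb : gammaRatio (4/γ^2 * (a - 1)) ≠ 0 :=
    gammaRatio_ne_zero (hΓ _ (by simp)) (hΓ _ (by simp))
  have hP : 0 < π * μ * lr (γ^2/4) :=
    mul_pos (mul_pos pi_pos hμ) (lr_pos (by positivity) (by nlinarith))
  rw [Rdozz_eq_gammaRatio hγ' ha, Rdozz_eq_gammaRatio hγ' hshift, mul_comm μ π, neg_div,
    show 2 + 4/γ^2 - 2*α/γ = 1 + 4/γ^2 * a by rw [← ha]; field_simp; ring,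
    show 2*α/γ = 1 - 4/γ^2 * (a - 1) by rw [← ha]; field_simp; ring]
  exact dual_shift_identity hP (by positivity) ha0 ha1 hfc hfb
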